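/- Let α₁ = [[0,I],[P,0]] and α₂ = [[0,0],[Q,0]]. Then the nested commutator [α₁,[α₁,[α₁,α₂]]] equals the block-diagonal matrix [[W,0],[0,-W^T]] with W = 3QP + PQ, provided P and Q are symmetric. -/
import Mathlib


open Matrix

/-- For symmetric `P`, `Q`, the nested commutator `[α₁,[α₁,[α₁,α₂]]]` equals
the block-diagonal matrix `[[W,0],[0,-Wᵀ]]` with `W = 3QP + PQ`. -/
theorem nested_commutator_1112 {r : ℕ}
    (P Q : Matrix (Fin r) (Fin r) ℝ) (hP : Pᵀ = P) (hQ : Qᵀ = Q)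
    (α₁ α₂ : Matrix (Fin r ⊕ Fin r) (Fin r ⊕ Fin r) ℝ)
    (h₁ : α₁ = Matrix.fromBlocks 0 1 P 0)
    (h₂ : α₂ = Matrix.fromBlocks 0 0 Q 0)
    (W : Matrix (Fin r) (Fin r) ℝ) (hW : W = 3 • (Q * P) + P * Q) :
    ⁅α₁, ⁅α₁, ⁅α₁, α₂⁆⁆⁆ = Matrix.fromBlocks W 0 0 (-Wᵀ) := by
  subst h₁ h₂ hW
  simp only [Ring.lie_def, Matrix.fromBlocks_multiply, Matrix.sub_mul, Matrix.mul_sub,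
    Matrix.fromBlocks_add, Matrix.transpose_add, Matrix.transpose_smul,
    Matrix.transpose_mul, hP, hQ, Matrix.mul_zero, Matrix.zero_mul, Matrix.mul_one,
    Matrix.one_mul, add_zero, zero_add, sub_zero, zero_sub, sub_self]
  rw [show (3:ℕ) • (Q*P) = Q*P+(Q*P+Q*P) by abel, show (3:ℕ) • (P*Q) = P*Q+(P*Q+P*Q) by abel]
  ext i j <;> cases i <;> cases j <;> simp [Matrix.fromBlocks, Matrix.sub_apply, Matrix.add_apply, Matrix.neg_apply] <;> ring
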